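/- Let d ≥ 1, λ ≥ 0, K ≥ 0, and let φ : ℝ^d → ℝ be K-Lipschitz and λ-concave. Fix t > 0 and set ψ_t(y) = ‖y‖²/2 + t·φ(y), with Legendre transform ψ_t*(x) = sup_{y} (⟨x,y⟩ − ψ_t(y)) and biconjugate ψ_t**(y) = sup_{x} (⟨x,y⟩ − ψ_t*(x)). Then: (a) ψ_t** is differentiable on ℝ^d and its gradient T_t := ∇ψ_t** is continuous; (b) T_t : ℝ^d → ℝ^d is surjective; (c) for all x, y ∈ ℝ^d one has T_t(y) = x if and only if y ∈ ∂ψ_t*(x); (d) ‖T_t(y₁) − T_t(y₂)‖ ≤ (1+λt)‖y₁ − y₂‖ for all y₁, y₂ ∈ ℝ^d. -/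

import Mathlib

open scoped RealInnerProductSpace
noncomputable section

/-- Legendre transform: `f*(x) = sup_y (⟨x,y⟩ − f(y))`. -/
def conj {d : ℕ} (f : EuclideanSpace ℝ (Fin d) → ℝ)
    (x : EuclideanSpace ℝ (Fin d)) : ℝ :=
  ⨆ y : EuclideanSpace ℝ (Fin d), (⟪x, y⟫ - f y)

/-- `ψ_t(y) = ‖y‖²/2 + t φ(y)`. -/
def psiFun {d : ℕ} (φ : EuclideanSpace ℝ (Fin d) → ℝ) (t : ℝ)
    (y : EuclideanSpace ℝ (Fin d)) : ℝ :=
  ‖y‖ ^ 2 / 2 + t * φ y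

/-!
Write `c = 1 + λt` and `f = ψ_t*`. Since `c‖·‖²/2 - ψ_t = t (λ‖·‖²/2 - φ)` is convex, the
substitution `y = u + c⁻¹ • x` exhibits `f - ‖·‖²/(2c)` as a supremum of convex functions, so `f`
is `c⁻¹`-strongly convex; the Lipschitz bound makes `ψ_t` and `f` grow quadratically, so all
suprema involved are attained. Strong convexity makes `∂f` strongly monotone: for every `y` there
is exactly one `T y` with `y ∈ ∂f (T y)` (the minimiser of `f - ⟪y, ·⟫`), and `T` is
`c`-Lipschitz. Then `f* y = ⟪y, T y⟫ - f (T y)`, and testing the suprema defining `f*` at `T y` and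
`T (y + v)` gives `|f* (y + v) - f* y - ⟪T y, v⟫| ≤ c‖v‖²`, so `∇ψ_t** = T`. Every `x` is a value
of `T`: if `y` maximises `⟪x, ·⟫ - ψ_t`, then `y ∈ ∂f x`.
-/

open Set Filter Topology Asymptotics

lemma tendsto_cocompact_atTop_of_quadratic_le {E : Type*} [NormedAddCommGroup E] [ProperSpace E]
    {g : E → ℝ} {A B : ℝ} (h : ∀ z, ‖z‖ ^ 2 / 2 - A * ‖z‖ - B ≤ g z) :
    Tendsto g (cocompact E) atTop := by
  refine tendsto_atTop_mono (fun z => ?_)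
    (tendsto_atTop_add_const_right _ (-((A + 1) ^ 2 / 2 + B)) tendsto_norm_cocompact_atTop)
  nlinarith [h z, sq_nonneg (‖z‖ - (A + 1))]

lemma convexOn_of_isLUB {ι E : Type*} [AddCommGroup E] [Module ℝ E] {s : Set E} {F : E → ℝ}
    {h : ι → E → ℝ} (hs : Convex ℝ s) (hh : ∀ i, ConvexOn ℝ s (h i))
    (hF : ∀ x ∈ s, IsLUB (range fun i => h i x) (F x)) : ConvexOn ℝ s F := by
  refine ⟨hs, fun x hx y hy a b ha hb hab => (hF _ (hs hx hy ha hb hab)).2 ?_⟩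
  rintro _ ⟨i, rfl⟩
  calc h i (a • x + b • y) ≤ a • h i x + b • h i y := (hh i).2 hx hy ha hb hab
    _ ≤ a • F x + b • F y := add_le_add
        (smul_le_smul_of_nonneg_left ((hF x hx).1 ⟨i, rfl⟩) ha)
        (smul_le_smul_of_nonneg_left ((hF y hy).1 ⟨i, rfl⟩) hb)

lemma continuous_of_abs_sub_le {F : Type*} [SeminormedAddCommGroup F] {φ : F → ℝ} {K : ℝ}
    (hLip : ∀ y z, |φ y - φ z| ≤ K * ‖y - z‖) : Continuous φ :=
  (LipschitzWith.of_dist_le' (K := K) fun y z => by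
    simpa only [dist_eq_norm, Real.norm_eq_abs] using hLip y z).continuous

lemma abs_mul_apply_sub_le {F : Type*} [SeminormedAddCommGroup F] {φ : F → ℝ} {K t : ℝ}
    (hLip : ∀ y z, |φ y - φ z| ≤ K * ‖y - z‖) (ht : 0 ≤ t) (y : F) :
    |t * φ y - t * φ 0| ≤ t * K * ‖y‖ := by
  rw [← mul_sub, abs_mul, abs_of_nonneg ht, mul_assoc]
  simpa using mul_le_mul_of_nonneg_left (hLip y 0) ht

section NormedSpace

variable {E : Type*} [NormedAddCommGroup E] [NormedSpace ℝ E] {f : E → ℝ} {m : ℝ}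

lemma StrongConvexOn.add_sq_le_of_forall_le (hf : StrongConvexOn univ m f) {x : E}
    (hx : ∀ w, f x ≤ f w) (z : E) : f x + m / 2 * ‖z - x‖ ^ 2 ≤ f z := by
  -- compare `f x` with `f ((1 - θ) • x + θ • z)` and let `θ → 0`
  have hθ : ∀ θ ∈ Ioo (0 : ℝ) 1, f x + (1 - θ) * (m / 2 * ‖z - x‖ ^ 2) ≤ f z := by
    rintro θ ⟨hθ₀, hθ₁⟩
    have hconv := hf.2 (mem_univ x) (mem_univ z) (sub_nonneg.2 hθ₁.le) hθ₀.le (sub_add_cancel 1 θ)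
    rw [norm_sub_rev] at hconv
    simp only [smul_eq_mul] at hconv
    have hmin := hx ((1 - θ) • x + θ • z)
    refine le_of_mul_le_mul_left ?_ hθ₀
    linarith
  have hlim : Tendsto (fun θ : ℝ => f x + (1 - θ) * (m / 2 * ‖z - x‖ ^ 2)) (𝓝[>] 0)
      (𝓝 (f x + m / 2 * ‖z - x‖ ^ 2)) :=
    tendsto_nhdsWithin_of_tendsto_nhds <| (by fun_prop : Continuous _).tendsto' 0 _ (by simp)
  exact le_of_tendsto hlim (eventually_of_mem (Ioo_mem_nhdsGT one_pos) hθ)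

end NormedSpace

section InnerProductSpace

variable {E : Type*} [NormedAddCommGroup E] [InnerProductSpace ℝ E] {f : E → ℝ} {m : ℝ}

/-- `y ∈ ∂f x`. -/
def HasSubgradientAt (f : E → ℝ) (y x : E) : Prop :=
  ∀ z, f x + ⟪y, z - x⟫ ≤ f z

lemma hasSubgradientAt_iff_forall_le {y x : E} :
    HasSubgradientAt f y x ↔ ∀ z, ⟪y, z⟫ - f z ≤ ⟪y, x⟫ - f x := by
  refine forall_congr' fun z => ?_
  rw [inner_sub_right]
  constructor <;> intro h <;> linarith

lemma StrongConvexOn.sub_inner (hf : StrongConvexOn univ m f) (y : E) :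
    StrongConvexOn univ m fun x => f x - ⟪y, x⟫ := by
  rw [strongConvexOn_iff_convex] at hf ⊢
  have hlin : ConcaveOn ℝ univ fun x => ⟪y, x⟫ := (innerₗ E y).concaveOn convex_univ
  simpa only [Pi.sub_def, sub_right_comm] using hf.sub hlin

lemma HasSubgradientAt.add_sq_le (hf : StrongConvexOn univ m f) {y x : E}
    (h : HasSubgradientAt f y x) (z : E) :
    f x + ⟪y, z - x⟫ + m / 2 * ‖z - x‖ ^ 2 ≤ f z := by
  have hmin : ∀ w, f x - ⟪y, x⟫ ≤ f w - ⟪y, w⟫ := fun w => by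
    linarith [hasSubgradientAt_iff_forall_le.1 h w]
  have := (hf.sub_inner y).add_sq_le_of_forall_le hmin z
  rw [inner_sub_right]
  linarith

lemma HasSubgradientAt.mul_norm_sub_le (hf : StrongConvexOn univ m f) {y₁ y₂ x₁ x₂ : E}
    (h₁ : HasSubgradientAt f y₁ x₁) (h₂ : HasSubgradientAt f y₂ x₂) :
    m * ‖x₁ - x₂‖ ≤ ‖y₁ - y₂‖ := by
  have hmono : m * ‖x₁ - x₂‖ ^ 2 ≤ ⟪y₁ - y₂, x₁ - x₂⟫ := by
    have e₁ := h₁.add_sq_le hf x₂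
    have e₂ := h₂.add_sq_le hf x₁
    rw [norm_sub_rev x₂] at e₁
    rw [inner_sub_right] at e₁ e₂
    rw [inner_sub_left, inner_sub_right, inner_sub_right]
    linarith
  rcases (norm_nonneg (x₁ - x₂)).eq_or_lt with h0 | hpos
  · rw [← h0, mul_zero]
    exact norm_nonneg _
  · refine le_of_mul_le_mul_right ?_ hpos
    calc m * ‖x₁ - x₂‖ * ‖x₁ - x₂‖ = m * ‖x₁ - x₂‖ ^ 2 := by ring
      _ ≤ ⟪y₁ - y₂, x₁ - x₂⟫ := hmono
      _ ≤ ‖y₁ - y₂‖ * ‖x₁ - x₂‖ := real_inner_le_norm _ _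

lemma HasSubgradientAt.eq (hf : StrongConvexOn univ m f) (hm : 0 < m) {y x₁ x₂ : E}
    (h₁ : HasSubgradientAt f y x₁) (h₂ : HasSubgradientAt f y x₂) : x₁ = x₂ := by
  have := h₁.mul_norm_sub_le hf h₂
  rw [sub_self, norm_zero] at this
  exact sub_eq_zero.1 (norm_le_zero_iff.1 (nonpos_of_mul_nonpos_right this hm))

lemma hasGradientAt_of_abs_sub_inner_le [CompleteSpace E] {F : E → ℝ} {g y : E} {C : ℝ}
    (h : ∀ v, |F (y + v) - F y - ⟪g, v⟫| ≤ C * ‖v‖ ^ 2) : HasGradientAt F g y := by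
  rw [hasGradientAt_iff_hasFDerivAt, hasFDerivAt_iff_isLittleO_nhds_zero]
  refine IsBigO.trans_isLittleO ?_ (isLittleO_norm_pow_id one_lt_two)
  refine IsBigO.of_bound C (Eventually.of_forall fun v => ?_)
  simpa [InnerProductSpace.toDual_apply_apply] using h v

lemma inner_sub_half_sq_norm_inv_smul_add {c : ℝ} (hc : c ≠ 0) (x u : E) :
    ⟪x, u + c⁻¹ • x⟫ - c / 2 * ‖u + c⁻¹ • x‖ ^ 2 - c⁻¹ / 2 * ‖x‖ ^ 2 = -(c / 2 * ‖u‖ ^ 2) := by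
  rw [norm_add_sq_real, norm_smul, inner_add_right, real_inner_smul_right, real_inner_smul_right,
    real_inner_self_eq_norm_sq, real_inner_comm, Real.norm_eq_abs, mul_pow, sq_abs]
  field_simp
  ring

lemma exists_hasSubgradientAt_of_tendsto [ProperSpace E] (hf : Continuous f) {y : E}
    (h : Tendsto (fun z => f z - ⟪y, z⟫) (cocompact E) atTop) : ∃ x, HasSubgradientAt f y x := by
  obtain ⟨x, hx⟩ := (show Continuous fun z => f z - ⟪y, z⟫ by fun_prop).exists_forall_le h
  exact ⟨x, hasSubgradientAt_iff_forall_le.2 fun z => by linarith [hx z]⟩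

end InnerProductSpace

section Conjugate

variable {d : ℕ}

local notation "E" => EuclideanSpace ℝ (Fin d)

variable {g : EuclideanSpace ℝ (Fin d) → ℝ}

lemma HasSubgradientAt.conj_eq {x y : E} (h : HasSubgradientAt g x y) :
    conj g x = ⟪x, y⟫ - g y := by
  have hle := hasSubgradientAt_iff_forall_le.1 h
  exact le_antisymm (ciSup_le hle) (le_ciSup ⟨_, forall_mem_range.2 hle⟩ y)

lemma inner_sub_le_conj (hg : ∀ x, ∃ y, HasSubgradientAt g x y) (x y : E) :
    ⟪x, y⟫ - g y ≤ conj g x := by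
  obtain ⟨y₀, h⟩ := hg x
  rw [h.conj_eq]
  exact hasSubgradientAt_iff_forall_le.1 h y

lemma HasSubgradientAt.conj (hg : ∀ x, ∃ y, HasSubgradientAt g x y) {x y : E}
    (h : HasSubgradientAt g x y) : HasSubgradientAt (conj g) y x := fun z => by
  have := inner_sub_le_conj hg z y
  rw [h.conj_eq, inner_sub_right, real_inner_comm x, real_inner_comm z]
  linarith

lemma hasGradientAt_conj {T : E → E} {L : NNReal} (hT : ∀ y, HasSubgradientAt g y (T y))
    (hL : LipschitzWith L T) (y : E) : HasGradientAt (conj g) (T y) y := by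
  -- `conj g` is attained at `T`, so testing its suprema at `T y` and `T (y + v)` traps the
  -- remainder between `0` and `⟪v, T (y + v) - T y⟫ ≤ L‖v‖²`
  have hle := inner_sub_le_conj fun y => ⟨T y, hT y⟩
  refine hasGradientAt_of_abs_sub_inner_le (C := L) fun v => abs_le.2 ⟨?_, ?_⟩
  · have := hle (y + v) (T y)
    rw [inner_add_left, real_inner_comm (T y) v] at this
    rw [(hT y).conj_eq]
    nlinarith [L.coe_nonneg, sq_nonneg ‖v‖]
  · have h₁ := hle y (T (y + v))
    have h₂ : ⟪v, T (y + v) - T y⟫ ≤ ‖v‖ * (L * ‖v‖) :=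
      (real_inner_le_norm _ _).trans (mul_le_mul_of_nonneg_left
        (by simpa using hL.norm_sub_le (y + v) y) (norm_nonneg v))
    rw [inner_sub_right, real_inner_comm (T y) v] at h₂
    rw [(hT (y + v)).conj_eq, inner_add_left]
    nlinarith

lemma strongConvexOn_conj {c : ℝ} (hc : 0 < c) (hg : ∀ x, ∃ y, HasSubgradientAt g x y)
    (hconv : ConvexOn ℝ univ fun y => c / 2 * ‖y‖ ^ 2 - g y) :
    StrongConvexOn univ c⁻¹ (conj g) := by
  -- `conj g x - c⁻¹/2 ‖x‖² = ⨆ u, N (u + c⁻¹ • x) - c/2 ‖u‖²` with `N = c/2 ‖·‖² - g` convex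
  have key : ∀ x u : E, ⟪x, u + c⁻¹ • x⟫ - g (u + c⁻¹ • x) - c⁻¹ / 2 * ‖x‖ ^ 2 =
      c / 2 * ‖u + c⁻¹ • x‖ ^ 2 - g (u + c⁻¹ • x) - c / 2 * ‖u‖ ^ 2 := fun x u => by
    linarith [inner_sub_half_sq_norm_inv_smul_add hc.ne' x u]
  rw [strongConvexOn_iff_convex]
  refine convexOn_of_isLUB (h := fun u x => c / 2 * ‖u + c⁻¹ • x‖ ^ 2 - g (u + c⁻¹ • x)
    - c / 2 * ‖u‖ ^ 2) convex_univ (fun u => ?_) fun x _ => ⟨?_, fun b hb => ?_⟩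
  · have := ((hconv.translate_right u).comp_linearMap (c⁻¹ • LinearMap.id)).add_const
      (-(c / 2 * ‖u‖ ^ 2))
    rw [preimage_univ, preimage_univ] at this
    refine this.congr fun x _ => ?_
    simp only [Pi.add_apply, Function.comp_apply, LinearMap.smul_apply, LinearMap.id_apply]
    ring
  · rintro _ ⟨u, rfl⟩
    linarith [key x u, inner_sub_le_conj hg x (u + c⁻¹ • x)]
  · have hsup : conj g x ≤ b + c⁻¹ / 2 * ‖x‖ ^ 2 := ciSup_le fun y => by
      have := hb ⟨y - c⁻¹ • x, rfl⟩
      dsimp only at this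
      rw [← key, sub_add_cancel] at this
      linarith
    linarith

variable {φ : EuclideanSpace ℝ (Fin d) → ℝ} {lam K t : ℝ}

lemma exists_hasSubgradientAt_psiFun (hLip : ∀ y z, |φ y - φ z| ≤ K * ‖y - z‖) (ht : 0 ≤ t)
    (x : E) : ∃ y, HasSubgradientAt (psiFun φ t) x y := by
  have hφ := continuous_of_abs_sub_le hLip
  refine exists_hasSubgradientAt_of_tendsto (by unfold psiFun; fun_prop) <|
    tendsto_cocompact_atTop_of_quadratic_le (A := t * K + ‖x‖) (B := -(t * φ 0)) fun y => ?_
  have h₁ := abs_le.1 (abs_mul_apply_sub_le hLip ht y)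
  have h₂ := real_inner_le_norm x y
  unfold psiFun
  linarith

lemma strongConvexOn_conj_psiFun (hLip : ∀ y z, |φ y - φ z| ≤ K * ‖y - z‖)
    (hConc : ConcaveOn ℝ univ fun y => φ y - lam / 2 * ‖y‖ ^ 2) (hlam : 0 ≤ lam) (ht : 0 ≤ t) :
    StrongConvexOn univ (1 + lam * t)⁻¹ (conj (psiFun φ t)) := by
  refine strongConvexOn_conj (by positivity) (exists_hasSubgradientAt_psiFun hLip ht) ?_
  refine (hConc.neg.smul ht).congr fun y _ => ?_
  simp only [psiFun, Pi.neg_apply, smul_eq_mul]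
  ring

lemma exists_hasSubgradientAt_conj_psiFun (hLip : ∀ y z, |φ y - φ z| ≤ K * ‖y - z‖)
    (hConc : ConcaveOn ℝ univ fun y => φ y - lam / 2 * ‖y‖ ^ 2) (hlam : 0 ≤ lam) (ht : 0 ≤ t)
    (y : E) : ∃ x, HasSubgradientAt (conj (psiFun φ t)) y x := by
  have hcont : Continuous (conj (psiFun φ t)) := continuousOn_univ.1 <|
    ((strongConvexOn_conj_psiFun hLip hConc hlam ht).convexOn fun r => by positivity).continuousOn
      isOpen_univ
  refine exists_hasSubgradientAt_of_tendsto hcont <|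
    tendsto_cocompact_atTop_of_quadratic_le (A := t * K + ‖y‖) (B := t * φ 0) fun z => ?_
  have h₁ := inner_sub_le_conj (exists_hasSubgradientAt_psiFun hLip ht) z z
  have h₂ := abs_le.1 (abs_mul_apply_sub_le hLip ht z)
  have h₃ := real_inner_le_norm y z
  rw [real_inner_self_eq_norm_sq, show psiFun φ t z = ‖z‖ ^ 2 / 2 + t * φ z from rfl] at h₁
  linarith

end Conjugate

theorem stmt11_general (d : ℕ) (lam K : ℝ) (hlam : 0 ≤ lam)
    (φ : EuclideanSpace ℝ (Fin d) → ℝ)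
    (hLip : ∀ y z, |φ y - φ z| ≤ K * ‖y - z‖)
    (hConc : ConcaveOn ℝ Set.univ (fun y => φ y - lam / 2 * ‖y‖ ^ 2))
    (t : ℝ) (ht : 0 < t) :
    Differentiable ℝ (conj (conj (psiFun φ t))) ∧
    Continuous (fun y => gradient (conj (conj (psiFun φ t))) y) ∧
    Function.Surjective (fun y => gradient (conj (conj (psiFun φ t))) y) ∧
    (∀ x y : EuclideanSpace ℝ (Fin d),
      gradient (conj (conj (psiFun φ t))) y = x ↔
        ∀ z, conj (psiFun φ t) z ≥ conj (psiFun φ t) x + ⟪y, z - x⟫) ∧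
    (∀ y₁ y₂ : EuclideanSpace ℝ (Fin d),
      ‖gradient (conj (conj (psiFun φ t))) y₁ -
        gradient (conj (conj (psiFun φ t))) y₂‖ ≤ (1 + lam * t) * ‖y₁ - y₂‖) := by
  have hc : 0 < 1 + lam * t := by positivity
  have hψ := exists_hasSubgradientAt_psiFun hLip ht.le
  have hf := strongConvexOn_conj_psiFun hLip hConc hlam ht.le
  choose T hT using exists_hasSubgradientAt_conj_psiFun hLip hConc hlam ht.le
  have hT_norm : ∀ y₁ y₂, ‖T y₁ - T y₂‖ ≤ (1 + lam * t) * ‖y₁ - y₂‖ := fun y₁ y₂ => by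
    rw [← inv_mul_le_iff₀ hc]
    exact (hT y₁).mul_norm_sub_le hf (hT y₂)
  have hT_lip : LipschitzWith (1 + lam * t).toNNReal T :=
    .of_dist_le' (by simpa only [dist_eq_norm] using hT_norm)
  have hgrad : ∀ y, HasGradientAt (conj (conj (psiFun φ t))) (T y) y := hasGradientAt_conj hT hT_lip
  have hgrad_eq : (fun y => gradient (conj (conj (psiFun φ t))) y) = T :=
    funext fun y => (hgrad y).gradient
  refine ⟨fun y => (hgrad y).differentiableAt, hgrad_eq ▸ hT_lip.continuous, ?_,
    fun x y => ?_, fun y₁ y₂ => ?_⟩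
  · rw [hgrad_eq]
    intro x
    obtain ⟨y, hy⟩ := hψ x
    exact ⟨y, (hT y).eq hf (inv_pos.2 hc) (hy.conj hψ)⟩
  · rw [(hgrad y).gradient]
    exact ⟨fun h => h ▸ hT y, (hT y).eq hf (inv_pos.2 hc)⟩
  · rw [(hgrad y₁).gradient, (hgrad y₂).gradient]
    exact hT_norm y₁ y₂

theorem stmt11 (d : ℕ) (hd : 1 ≤ d) (lam K : ℝ) (hlam : 0 ≤ lam) (hK : 0 ≤ K)
    (φ : EuclideanSpace ℝ (Fin d) → ℝ)
    (hLip : ∀ y z, |φ y - φ z| ≤ K * ‖y - z‖)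
    (hConc : ConcaveOn ℝ Set.univ (fun y => φ y - lam / 2 * ‖y‖ ^ 2))
    (t : ℝ) (ht : 0 < t) :
    Differentiable ℝ (conj (conj (psiFun φ t))) ∧
    Continuous (fun y => gradient (conj (conj (psiFun φ t))) y) ∧
    Function.Surjective (fun y => gradient (conj (conj (psiFun φ t))) y) ∧
    (∀ x y : EuclideanSpace ℝ (Fin d),
      gradient (conj (conj (psiFun φ t))) y = x ↔
        ∀ z, conj (psiFun φ t) z ≥ conj (psiFun φ t) x + ⟪y, z - x⟫) ∧
    (∀ y₁ y₂ : EuclideanSpace ℝ (Fin d),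
      ‖gradient (conj (conj (psiFun φ t))) y₁ -
        gradient (conj (conj (psiFun φ t))) y₂‖ ≤ (1 + lam * t) * ‖y₁ - y₂‖) :=
  stmt11_general d lam K hlam φ hLip hConc t ht
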